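/- Let 0 ≤ α ≤ 1 and 0 ≤ d ≤ 1, and let S_d = {(x,y) ∈ ℝ² : x ≥ 0, y ≥ 0, x + y ≤ d}. Then the worst-case outer bound on the symmetric diversity–multiplexing tradeoff satisfies inf{ r̄(x₁,y₁,x₂,y₂) : (x₁,y₁) ∈ S_d, (x₂,y₂) ∈ S_d } = min( 1 − d , max( 1 − α/2 − d , (1 − d + α)/4 ) , max( α − d , 1 − α − d , (1 + α − d)/3 ) ). -/

import Mathlib

/-!
The lower bound holds pointwise on `S_d × S_d`: every `āᵢⱼ` dominates each argument of its `max`,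
so with `xᵢ + yᵢ ≤ d` each term of `r̄` dominates one of the three pieces of the bound. Since `r̄`
is symmetric under exchanging the users, four of its seven terms suffice. Conversely, each piece is
reached at an explicit state: `1 - d` at `(d,0,0,0)`; the second piece at `(d,0,d,0)` (both direct
links faded) or, when `α + d ≥ 1`, at a state whose second user splits `d` so that `ā₁₁ = 0`; the
third at `(d,0,d,0)`, at the symmetric state where the two arguments of `ā₁₃` agree, or at
`(0,d,0,d)` (both cross links faded).
-/

/-- Per-state symmetric g.d.o.f. `r̄(x₁,y₁,x₂,y₂)` of the two-user interference
channel with direct fading exponents `x₁,x₂` and cross fading exponents `y₁,y₂`,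
achievable when the transmitters know the channel gains. -/
noncomputable def rbar (α x₁ y₁ x₂ y₂ : ℝ) : ℝ :=
  let a11 := max (1 - α - x₁ + y₂) 0
  let a12 := max (1 - x₁) 0
  let a13 := max (max (1 - α - x₁ + y₂) (α - y₁)) 0
  let a14 := max (max (1 - x₁) (α - y₁)) 0
  let a21 := max (1 - α - x₂ + y₁) 0
  let a22 := max (1 - x₂) 0
  let a23 := max (max (1 - α - x₂ + y₁) (α - y₂)) 0
  let a24 := max (max (1 - x₂) (α - y₂)) 0
  min a12 (min a22 (min ((a11 + a24)/2) (min ((a21 + a14)/2) (min ((a13 + a23)/2)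
    (min ((a11 + a14 + a23)/3) ((a21 + a24 + a13)/3))))))

noncomputable def rbarHalf (α x₁ y₁ x₂ y₂ : ℝ) : ℝ :=
  min (max (1 - x₁) 0)
    (min ((max (1 - α - x₁ + y₂) 0 + max (max (1 - x₂) (α - y₂)) 0) / 2)
      (min ((max (max (1 - α - x₁ + y₂) (α - y₁)) 0
              + max (max (1 - α - x₂ + y₁) (α - y₂)) 0) / 2)
        ((max (1 - α - x₁ + y₂) 0 + max (max (1 - x₁) (α - y₁)) 0
          + max (max (1 - α - x₂ + y₁) (α - y₂)) 0) / 3)))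

theorem rbar_eq_min_rbarHalf (α x₁ y₁ x₂ y₂ : ℝ) :
    rbar α x₁ y₁ x₂ y₂ = min (rbarHalf α x₁ y₁ x₂ y₂) (rbarHalf α x₂ y₂ x₁ y₁) := by
  simp only [rbar, rbarHalf]
  rw [add_comm (max (max (1 - α - x₂ + y₁) (α - y₂)) 0)]
  apply le_antisymm <;> simp only [le_min_iff, min_le_iff, le_refl, true_or, or_true, and_self]

theorem rbar_le_rbarHalf (α x₁ y₁ x₂ y₂ : ℝ) : rbar α x₁ y₁ x₂ y₂ ≤ rbarHalf α x₁ y₁ x₂ y₂ :=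
  (rbar_eq_min_rbarHalf α x₁ y₁ x₂ y₂).trans_le (min_le_left _ _)

noncomputable def symDMTOuterBound (α d : ℝ) : ℝ :=
  min (1 - d)
    (min (max (1 - α/2 - d) ((1 - d + α)/4))
      (max (α - d) (max (1 - α - d) ((1 + α - d)/3))))

theorem symDMTOuterBound_le_rbarHalf {α d x₁ y₁ x₂ y₂ : ℝ} (hα : 0 ≤ α)
    (hx₁ : 0 ≤ x₁) (hy₁ : 0 ≤ y₁) (h₁ : x₁ + y₁ ≤ d)
    (hx₂ : 0 ≤ x₂) (hy₂ : 0 ≤ y₂) (h₂ : x₂ + y₂ ≤ d) :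
    symDMTOuterBound α d ≤ rbarHalf α x₁ y₁ x₂ y₂ := by
  have hA : symDMTOuterBound α d ≤ 1 - d := min_le_left _ _
  have hB : symDMTOuterBound α d ≤ max (1 - α/2 - d) ((1 - d + α)/4) :=
    (min_le_right _ _).trans (min_le_left _ _)
  have hC : symDMTOuterBound α d ≤ max (α - d) (max (1 - α - d) ((1 + α - d)/3)) :=
    (min_le_right _ _).trans (min_le_right _ _)
  unfold rbarHalf
  set a₁₁ := max (1 - α - x₁ + y₂) 0
  set a₁₃ := max (max (1 - α - x₁ + y₂) (α - y₁)) 0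
  set a₁₄ := max (max (1 - x₁) (α - y₁)) 0
  set a₂₃ := max (max (1 - α - x₂ + y₁) (α - y₂)) 0
  set a₂₄ := max (max (1 - x₂) (α - y₂)) 0
  have h₁₁ : 1 - α - x₁ + y₂ ≤ a₁₁ ∧ 0 ≤ a₁₁ := ⟨le_max_left _ _, le_max_right _ _⟩
  have h₁₃ : 1 - α - x₁ + y₂ ≤ a₁₃ ∧ α - y₁ ≤ a₁₃ :=
    ⟨le_max_of_le_left (le_max_left _ _), le_max_of_le_left (le_max_right _ _)⟩
  have h₁₄ : 1 - x₁ ≤ a₁₄ ∧ α - y₁ ≤ a₁₄ :=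
    ⟨le_max_of_le_left (le_max_left _ _), le_max_of_le_left (le_max_right _ _)⟩
  have h₂₃ : 1 - α - x₂ + y₁ ≤ a₂₃ ∧ α - y₂ ≤ a₂₃ :=
    ⟨le_max_of_le_left (le_max_left _ _), le_max_of_le_left (le_max_right _ _)⟩
  have h₂₄ : 1 - x₂ ≤ a₂₄ ∧ α - y₂ ≤ a₂₄ :=
    ⟨le_max_of_le_left (le_max_left _ _), le_max_of_le_left (le_max_right _ _)⟩
  refine le_min ?_ (le_min ?_ (le_min ?_ ?_))
  · exact hA.trans (le_max_of_le_left (by linarith))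
  · refine hB.trans (max_le ?_ ?_) <;> linarith
  · refine hC.trans (max_le ?_ (max_le ?_ ?_)) <;> linarith
  · rcases le_total α (2/3) with hα' | hα'
    · refine hC.trans (max_le ?_ (max_le ?_ ?_)) <;> linarith
    · refine hB.trans (max_le ?_ ?_) <;> linarith

theorem symDMTOuterBound_le_rbar {α d x₁ y₁ x₂ y₂ : ℝ} (hα : 0 ≤ α)
    (hx₁ : 0 ≤ x₁) (hy₁ : 0 ≤ y₁) (h₁ : x₁ + y₁ ≤ d)
    (hx₂ : 0 ≤ x₂) (hy₂ : 0 ≤ y₂) (h₂ : x₂ + y₂ ≤ d) :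
    symDMTOuterBound α d ≤ rbar α x₁ y₁ x₂ y₂ := by
  rw [rbar_eq_min_rbarHalf]
  exact le_min (symDMTOuterBound_le_rbarHalf hα hx₁ hy₁ h₁ hx₂ hy₂ h₂)
    (symDMTOuterBound_le_rbarHalf hα hx₂ hy₂ h₂ hx₁ hy₁ h₁)

theorem rbar_le_one_sub {α x₁ y₁ x₂ y₂ : ℝ} (h : x₁ ≤ 1) : rbar α x₁ y₁ x₂ y₂ ≤ 1 - x₁ :=
  (rbar_le_rbarHalf α x₁ y₁ x₂ y₂).trans
    ((min_le_left _ _).trans_eq (max_eq_left (sub_nonneg.mpr h)))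

theorem rbar_le_avg_a11_a24 (α x₁ y₁ x₂ y₂ : ℝ) :
    rbar α x₁ y₁ x₂ y₂ ≤ (max (1 - α - x₁ + y₂) 0 + max (max (1 - x₂) (α - y₂)) 0) / 2 :=
  (rbar_le_rbarHalf α x₁ y₁ x₂ y₂).trans ((min_le_right _ _).trans (min_le_left _ _))

theorem rbar_le_avg_a13_a23 (α x₁ y₁ x₂ y₂ : ℝ) :
    rbar α x₁ y₁ x₂ y₂ ≤ (max (max (1 - α - x₁ + y₂) (α - y₁)) 0
      + max (max (1 - α - x₂ + y₁) (α - y₂)) 0) / 2 :=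
  (rbar_le_rbarHalf α x₁ y₁ x₂ y₂).trans
    ((min_le_right _ _).trans ((min_le_right _ _).trans (min_le_left _ _)))

theorem rbar_direct_fade_le_of_add_le_one {α d : ℝ} (hα : 0 ≤ α) (h : α + d ≤ 1) :
    rbar α d 0 d 0 ≤ 1 - α / 2 - d := by
  refine (rbar_le_avg_a11_a24 α d 0 d 0).trans ?_
  have h₁₁ : max (1 - α - d + 0) 0 ≤ 1 - α - d := max_le (by linarith) (by linarith)
  have h₂₄ : max (max (1 - d) (α - 0)) 0 ≤ 1 - d :=
    max_le (max_le le_rfl (by linarith)) (by linarith)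
  linarith

theorem rbar_direct_fade_le_of_two_mul_add_le_one {α d : ℝ} (hα : 0 ≤ α) (h : 2 * α + d ≤ 1) :
    rbar α d 0 d 0 ≤ 1 - α - d := by
  refine (rbar_le_avg_a13_a23 α d 0 d 0).trans ?_
  have h₁₃ : max (max (1 - α - d + 0) (α - 0)) 0 ≤ 1 - α - d :=
    max_le (max_le (by linarith) (by linarith)) (by linarith)
  linarith

theorem rbar_split_fade_le {α d : ℝ} (hα : 0 ≤ α) (hd : d ≤ 1) (h : 1 ≤ α + d) :
    rbar α d 0 ((1 + d - α) / 2) ((α + d - 1) / 2) ≤ (1 - d + α) / 4 := by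
  refine (rbar_le_avg_a11_a24 _ _ _ _ _).trans ?_
  have h₁₁ : max (1 - α - d + (α + d - 1) / 2) 0 ≤ 0 := max_le (by linarith) le_rfl
  have h₂₄ : max (max (1 - (1 + d - α) / 2) (α - (α + d - 1) / 2)) 0 ≤ (1 + α - d) / 2 :=
    max_le (max_le (by linarith) (by linarith)) (by linarith)
  linarith

theorem rbar_balanced_fade_le {α d : ℝ} (hα : 0 ≤ α) (hd : d ≤ 1) :
    rbar α ((2 * d - 2 * α + 1) / 3) ((2 * α + d - 1) / 3)
      ((2 * d - 2 * α + 1) / 3) ((2 * α + d - 1) / 3) ≤ (1 + α - d) / 3 := by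
  refine (rbar_le_avg_a13_a23 _ _ _ _ _).trans ?_
  have h₁₃ : max (max (1 - α - (2 * d - 2 * α + 1) / 3 + (2 * α + d - 1) / 3)
      (α - (2 * α + d - 1) / 3)) 0 ≤ (1 + α - d) / 3 :=
    max_le (max_le (by linarith) (by linarith)) (by linarith)
  linarith

theorem rbar_cross_fade_le {α d : ℝ} (h : 1 + 2 * d ≤ 2 * α) : rbar α 0 d 0 d ≤ α - d := by
  refine (rbar_le_avg_a13_a23 α 0 d 0 d).trans ?_
  have h₁₃ : max (max (1 - α - 0 + d) (α - d)) 0 ≤ α - d :=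
    max_le (max_le (by linarith) le_rfl) (by linarith)
  linarith

/-- For `0 ≤ α ≤ 1` and `0 ≤ d ≤ 1`, the worst-case outer bound on
the symmetric DMT over the no-outage set `S_d × S_d` is
`min(1-d, max(1-α/2-d, (1-d+α)/4), max(α-d, 1-α-d, (1+α-d)/3))`. -/
theorem stmt_11 (α d : ℝ) (hα₁ : 0 ≤ α) (hα₂ : α ≤ 1) (hd₁ : 0 ≤ d) (hd₂ : d ≤ 1) :
    sInf {z : ℝ | ∃ x₁ y₁ x₂ y₂ : ℝ,
        0 ≤ x₁ ∧ 0 ≤ y₁ ∧ x₁ + y₁ ≤ d ∧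
        0 ≤ x₂ ∧ 0 ≤ y₂ ∧ x₂ + y₂ ≤ d ∧
        z = rbar α x₁ y₁ x₂ y₂} =
      min (1 - d)
        (min (max (1 - α/2 - d) ((1 - d + α)/4))
          (max (α - d) (max (1 - α - d) ((1 + α - d)/3)))) := by
  change _ = symDMTOuterBound α d
  refine IsGLB.csInf_eq ⟨?_, fun l hl => ?_⟩
    ⟨_, 0, 0, 0, 0, le_rfl, le_rfl, by linarith, le_rfl, le_rfl, by linarith, rfl⟩
  · rintro z ⟨x₁, y₁, x₂, y₂, hx₁, hy₁, h₁, hx₂, hy₂, h₂, rfl⟩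
    exact symDMTOuterBound_le_rbar hα₁ hx₁ hy₁ h₁ hx₂ hy₂ h₂
  have le_rbar : ∀ x₁ y₁ x₂ y₂ : ℝ, 0 ≤ x₁ ∧ 0 ≤ y₁ ∧ x₁ + y₁ ≤ d ∧
      0 ≤ x₂ ∧ 0 ≤ y₂ ∧ x₂ + y₂ ≤ d → l ≤ rbar α x₁ y₁ x₂ y₂ := by
    rintro x₁ y₁ x₂ y₂ ⟨hx₁, hy₁, h₁, hx₂, hy₂, h₂⟩
    exact hl ⟨x₁, y₁, x₂, y₂, hx₁, hy₁, h₁, hx₂, hy₂, h₂, rfl⟩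
  refine le_min ?_ (le_min ?_ ?_)
  · exact (le_rbar d 0 0 0 (by and_intros <;> linarith)).trans (rbar_le_one_sub hd₂)
  · rcases le_total (α + d) 1 with h | h
    · exact (le_rbar _ _ _ _ (by and_intros <;> linarith)).trans
        ((rbar_direct_fade_le_of_add_le_one hα₁ h).trans (le_max_left _ _))
    · exact (le_rbar _ _ _ _ (by and_intros <;> linarith)).trans
        ((rbar_split_fade_le hα₁ hd₂ h).trans (le_max_right _ _))
  · rcases le_total (2 * α + d) 1 with h | h
    · exact (le_rbar _ _ _ _ (by and_intros <;> linarith)).trans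
        ((rbar_direct_fade_le_of_two_mul_add_le_one hα₁ h).trans
          ((le_max_left _ _).trans (le_max_right _ _)))
    rcases le_total (2 * α) (1 + 2 * d) with h' | h'
    · exact (le_rbar _ _ _ _ (by and_intros <;> linarith)).trans
        ((rbar_balanced_fade_le hα₁ hd₂).trans ((le_max_right _ _).trans (le_max_right _ _)))
    · exact (le_rbar _ _ _ _ (by and_intros <;> linarith)).trans
        ((rbar_cross_fade_le h').trans (le_max_left _ _))
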